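/- Let d ≥ 1 and let I ⊂ ℤ^d∖{0} be a finite set. Suppose m, l ∈ ℤ^d∖{0} satisfy ⟨m,l⟩ ≠ 0 and c_m, s_m, c_l, s_l ∈ H_∞(I). Then c_{m+l} ∈ H_∞(I) and s_{m+l} ∈ H_∞(I). -/

import Mathlib

open Real MeasureTheory

/-- ⟨x, m⟩ = ∑ x_j m_j for x ∈ ℝ^d, m ∈ ℤ^d. -/
noncomputable def ip (d : ℕ) (x : Fin d → ℝ) (m : Fin d → ℤ) : ℝ :=
  ∑ j, x j * (m j : ℝ)

/-- Integer inner product on ℤ^d. -/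
def ipZ (d : ℕ) (m l : Fin d → ℤ) : ℤ := ∑ j, m j * l j

/-- c_m(x) = cos⟨x,m⟩. -/
noncomputable def cmap (d : ℕ) (m : Fin d → ℤ) : (Fin d → ℝ) → ℝ :=
  fun x => Real.cos (ip d x m)

/-- s_m(x) = sin⟨x,m⟩. -/
noncomputable def smap (d : ℕ) (m : Fin d → ℤ) : (Fin d → ℝ) → ℝ :=
  fun x => Real.sin (ip d x m)

/-- B(φ)(x) = ∑_j (∂_{x_j} φ(x))². -/
noncomputable def Bop (d : ℕ) (φ : (Fin d → ℝ) → ℝ) : (Fin d → ℝ) → ℝ :=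
  fun x => ∑ j, (fderiv ℝ φ x (Pi.single j 1)) ^ 2

/-- Functions representable as θ₀ − ∑_{j=1}^n B(θ_j) with θ's in H, n ≥ 1. -/
noncomputable def BRep (d : ℕ) (H : Set ((Fin d → ℝ) → ℝ)) : Set ((Fin d → ℝ) → ℝ) :=
  { f | ∃ n : ℕ, 1 ≤ n ∧ ∃ θ₀ ∈ H, ∃ θ : Fin n → (Fin d → ℝ) → ℝ,
      (∀ j, θ j ∈ H) ∧ f = θ₀ - ∑ j, Bop d (θ j) }

/-- F(H): f such that both f and −f are representable. -/
noncomputable def Fop (d : ℕ) (H : Set ((Fin d → ℝ) → ℝ)) : Set ((Fin d → ℝ) → ℝ) :=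
  { f | f ∈ BRep d H ∧ -f ∈ BRep d H }

/-- H(I): span of {1} ∪ {c_k, s_k : k ∈ I}. -/
noncomputable def H0 (d : ℕ) (I : Finset (Fin d → ℤ)) : Set ((Fin d → ℝ) → ℝ) :=
  ↑(Submodule.span ℝ
      ({fun _ => (1:ℝ)} ∪ ⋃ k ∈ (I : Set (Fin d → ℤ)), {cmap d k, smap d k}))

noncomputable def HSeq (d : ℕ) (I : Finset (Fin d → ℤ)) : ℕ → Set ((Fin d → ℝ) → ℝ)
  | 0 => H0 d I
  | j + 1 => Fop d (HSeq d I j)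

/-- H_∞(I) = ⋃_j H_j(I). -/
noncomputable def Hinf (d : ℕ) (I : Finset (Fin d → ℤ)) : Set ((Fin d → ℝ) → ℝ) :=
  ⋃ j, HSeq d I j

/-- I generates ℤ^d over ℤ. -/
def IsGenerator (d : ℕ) (I : Finset (Fin d → ℤ)) : Prop :=
  ∀ n : Fin d → ℤ, ∃ a : (Fin d → ℤ) → ℤ, n = ∑ k ∈ I, a k • k

/-- Connectedness condition of Proposition 2.5. -/
def ConnectedSet (d : ℕ) (I : Finset (Fin d → ℤ)) : Prop :=
  ∀ l ∈ I, ∀ m ∈ I, ∃ k : ℕ, ∃ n : Fin (k + 1) → (Fin d → ℤ),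
    (∀ j, n j ∈ I) ∧ ipZ d l (n 0) ≠ 0 ∧
    (∀ j : Fin k, ipZ d (n j.castSucc) (n j.succ) ≠ 0) ∧
    ipZ d (n (Fin.last k)) m ≠ 0

/-- (2πℤ^d)-periodicity for real-valued functions. -/
def Periodic2pi (d : ℕ) (f : (Fin d → ℝ) → ℝ) : Prop :=
  ∀ (x : Fin d → ℝ) (k : Fin d → ℤ), f (x + fun j => 2 * Real.pi * (k j : ℝ)) = f x

/-! Since `∇c_m = -s_m m` and `∇s_m = c_m m`, the addition formulas give, for `ε = ±1`,
`(|m|² + |l|²) - B(s_m - ε s_l) - B(c_m + ε c_l) = 2ε⟨m,l⟩ c_{m+l}` and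
`(|m|² + |l|²) - B(c_m + ε s_l) - B(s_m + ε c_l) = 2ε⟨m,l⟩ s_{m+l}`.
Each `H_j` is a vector space containing the constants, and the `H_j` increase; so once
`c_m, s_m, c_l, s_l ∈ H_j`, the functions `±2⟨m,l⟩ c_{m+l}` and `±2⟨m,l⟩ s_{m+l}` are
representable over `H_j`. Representability survives multiplication by `1 / (2|⟨m,l⟩|) ≥ 0`
(absorb its square root into the `θ_i`), which puts `c_{m+l}` and `s_{m+l}` in `H_{j+1}`. -/

section Representable

variable {d : ℕ} {M : Submodule ℝ ((Fin d → ℝ) → ℝ)} {f g : (Fin d → ℝ) → ℝ}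

lemma Bop_zero : Bop d 0 = 0 := by
  funext x
  simp [Bop]

lemma Bop_const_smul (c : ℝ) (φ : (Fin d → ℝ) → ℝ) : Bop d (c • φ) = c ^ 2 • Bop d φ := by
  funext x
  simp [Bop, fderiv_const_smul_field, mul_pow, Finset.mul_sum]

lemma mem_BRep_of_mem (hf : f ∈ M) : f ∈ BRep d M :=
  ⟨1, le_rfl, f, hf, fun _ => 0, fun _ => M.zero_mem, by simp [Bop_zero]⟩

lemma sub_Bop_add_Bop_mem_BRep {θ₀ θ₁ θ₂ : (Fin d → ℝ) → ℝ} (h₀ : θ₀ ∈ M) (h₁ : θ₁ ∈ M)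
    (h₂ : θ₂ ∈ M) : θ₀ - (Bop d θ₁ + Bop d θ₂) ∈ BRep d M :=
  ⟨2, one_le_two, θ₀, h₀, ![θ₁, θ₂], fun j => by fin_cases j <;> assumption, by
    simp [Fin.sum_univ_two]⟩

lemma add_mem_BRep (hf : f ∈ BRep d M) (hg : g ∈ BRep d M) : f + g ∈ BRep d M := by
  obtain ⟨n, hn, θ₀, hθ₀, θ, hθ, rfl⟩ := hf
  obtain ⟨p, -, η₀, hη₀, η, hη, rfl⟩ := hg
  refine ⟨n + p, hn.trans (n.le_add_right p), θ₀ + η₀, M.add_mem hθ₀ hη₀, Fin.append θ η,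
    Fin.addCases (by simpa using hθ) (by simpa using hη), ?_⟩
  rw [Fin.sum_univ_add]
  simp only [Fin.append_left, Fin.append_right]
  abel

lemma smul_mem_BRep {a : ℝ} (ha : 0 ≤ a) (hf : f ∈ BRep d M) : a • f ∈ BRep d M := by
  obtain ⟨n, hn, θ₀, hθ₀, θ, hθ, rfl⟩ := hf
  refine ⟨n, hn, a • θ₀, M.smul_mem a hθ₀, fun j => √a • θ j, fun j => M.smul_mem _ (hθ j), ?_⟩
  simp [Bop_const_smul, Real.sq_sqrt ha, smul_sub, Finset.smul_sum]

lemma mem_Fop_of_smul_mem_BRep {t : ℝ} (ht : t ≠ 0) (h₁ : t • f ∈ BRep d M)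
    (h₂ : (-t) • f ∈ BRep d M) : f ∈ Fop d M := by
  wlog htpos : 0 < t generalizing t
  · exact this (neg_ne_zero.mpr ht) h₂ (by rwa [neg_neg]) 
      (neg_pos.mpr ((not_lt.mp htpos).lt_of_ne ht))
  have hinv : 0 ≤ t⁻¹ := inv_nonneg.mpr htpos.le
  constructor
  · simpa [smul_smul, ht] using smul_mem_BRep hinv h₁
  · simpa [smul_smul, ht] using smul_mem_BRep hinv h₂

end Representable

section Hierarchy

noncomputable def Fsubmodule (d : ℕ) (M : Submodule ℝ ((Fin d → ℝ) → ℝ)) :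
    Submodule ℝ ((Fin d → ℝ) → ℝ) where
  carrier := Fop d M
  add_mem' hf hg := ⟨add_mem_BRep hf.1 hg.1, by rw [neg_add]; exact add_mem_BRep hf.2 hg.2⟩
  zero_mem' := ⟨mem_BRep_of_mem M.zero_mem, by rw [neg_zero]; exact mem_BRep_of_mem M.zero_mem⟩
  smul_mem' a f hf := by
    rcases le_total 0 a with ha | ha
    · exact ⟨smul_mem_BRep ha hf.1, by rw [← smul_neg]; exact smul_mem_BRep ha hf.2⟩
    · refine ⟨?_, ?_⟩
      · simpa using smul_mem_BRep (neg_nonneg.mpr ha) hf.2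
      · simpa using smul_mem_BRep (neg_nonneg.mpr ha) hf.1

lemma le_Fsubmodule (d : ℕ) (M : Submodule ℝ ((Fin d → ℝ) → ℝ)) : M ≤ Fsubmodule d M :=
  fun _ hf => ⟨mem_BRep_of_mem hf, mem_BRep_of_mem (M.neg_mem hf)⟩

noncomputable def HSeqSubmodule (d : ℕ) (I : Finset (Fin d → ℤ)) :
    ℕ → Submodule ℝ ((Fin d → ℝ) → ℝ)
  | 0 => Submodule.span ℝ ({fun _ => 1} ∪ ⋃ k ∈ (I : Set (Fin d → ℤ)), {cmap d k, smap d k})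
  | j + 1 => Fsubmodule d (HSeqSubmodule d I j)

lemma coe_HSeqSubmodule (d : ℕ) (I : Finset (Fin d → ℤ)) (j : ℕ) :
    (HSeqSubmodule d I j : Set ((Fin d → ℝ) → ℝ)) = HSeq d I j := by
  induction j with
  | zero => rfl
  | succ j ih => simp only [HSeqSubmodule, HSeq, ← ih]; rfl

lemma HSeqSubmodule_monotone (d : ℕ) (I : Finset (Fin d → ℤ)) : Monotone (HSeqSubmodule d I) :=
  monotone_nat_of_le_succ fun j => le_Fsubmodule d (HSeqSubmodule d I j)

lemma one_mem_HSeqSubmodule (d : ℕ) (I : Finset (Fin d → ℤ)) (j : ℕ) : 1 ∈ HSeqSubmodule d I j :=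
  HSeqSubmodule_monotone d I j.zero_le (Submodule.subset_span (Set.mem_union_left _ rfl))

lemma mem_Hinf_iff {d : ℕ} {I : Finset (Fin d → ℤ)} {f : (Fin d → ℝ) → ℝ} :
    f ∈ Hinf d I ↔ ∃ j, f ∈ HSeqSubmodule d I j := by
  simp [Hinf, ← coe_HSeqSubmodule]

end Hierarchy

section Trigonometric

variable {d : ℕ}

noncomputable def ipCLM (d : ℕ) (m : Fin d → ℤ) : (Fin d → ℝ) →L[ℝ] ℝ :=
  ∑ j, (m j : ℝ) • ContinuousLinearMap.proj j

lemma ipCLM_apply (m : Fin d → ℤ) (x : Fin d → ℝ) : ipCLM d m x = ip d x m := by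
  simp [ipCLM, ip, mul_comm]

lemma ipCLM_single (m : Fin d → ℤ) (j : Fin d) : ipCLM d m (Pi.single j 1) = m j := by
  simp [ipCLM_apply, ip, Pi.single_apply]

lemma hasFDerivAt_ip (m : Fin d → ℤ) (x : Fin d → ℝ) :
    HasFDerivAt (fun y => ip d y m) (ipCLM d m) x := by
  convert (ipCLM d m).hasFDerivAt using 1
  exact funext fun y => (ipCLM_apply m y).symm

lemma hasFDerivAt_cmap (m : Fin d → ℤ) (x : Fin d → ℝ) :
    HasFDerivAt (cmap d m) (-smap d m x • ipCLM d m) x :=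
  (Real.hasDerivAt_cos _).comp_hasFDerivAt x (hasFDerivAt_ip m x)

lemma hasFDerivAt_smap (m : Fin d → ℤ) (x : Fin d → ℝ) :
    HasFDerivAt (smap d m) (cmap d m x • ipCLM d m) x :=
  (Real.hasDerivAt_sin _).comp_hasFDerivAt x (hasFDerivAt_ip m x)

lemma smap_sq_add_cmap_sq (m : Fin d → ℤ) (x : Fin d → ℝ) :
    smap d m x ^ 2 + cmap d m x ^ 2 = 1 :=
  Real.sin_sq_add_cos_sq _

lemma ip_add (m l : Fin d → ℤ) (x : Fin d → ℝ) : ip d x (m + l) = ip d x m + ip d x l := by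
  simp [ip, mul_add, Finset.sum_add_distrib]

lemma cmap_add (m l : Fin d → ℤ) (x : Fin d → ℝ) :
    cmap d (m + l) x = cmap d m x * cmap d l x - smap d m x * smap d l x := by
  simp only [cmap, smap, ip_add, Real.cos_add]

lemma smap_add (m l : Fin d → ℤ) (x : Fin d → ℝ) :
    smap d (m + l) x = smap d m x * cmap d l x + cmap d m x * smap d l x := by
  simp only [cmap, smap, ip_add, Real.sin_add]

lemma Bop_apply_of_hasFDerivAt {φ : (Fin d → ℝ) → ℝ} {m l : Fin d → ℤ} {α β : ℝ}
    {x : Fin d → ℝ} (h : HasFDerivAt φ (α • ipCLM d m + β • ipCLM d l) x) :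
    Bop d φ x = α ^ 2 * ipZ d m m + β ^ 2 * ipZ d l l + 2 * α * β * ipZ d m l := by
  simp only [Bop, h.fderiv, add_apply, smul_apply, ipCLM_single, smul_eq_mul, ipZ, Int.cast_sum,
    Int.cast_mul, Finset.mul_sum, ← Finset.sum_add_distrib]
  exact Finset.sum_congr rfl fun j _ => by ring

end Trigonometric

section Frequencies

variable {d : ℕ} {M : Submodule ℝ ((Fin d → ℝ) → ℝ)} {m l : Fin d → ℤ}

lemma sub_Bop_smap_sub_add_Bop_cmap_add (m l : Fin d → ℤ) {ε : ℝ} (hε : ε ^ 2 = 1) :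
    ((ipZ d m m + ipZ d l l : ℝ) • 1
        - (Bop d (smap d m - ε • smap d l) + Bop d (cmap d m + ε • cmap d l)))
      = (2 * ε * ipZ d m l) • cmap d (m + l) := by
  funext x
  have h₁ : Bop d (smap d m - ε • smap d l) x = (cmap d m x) ^ 2 * ipZ d m m
      + (-ε * cmap d l x) ^ 2 * ipZ d l l + 2 * cmap d m x * (-ε * cmap d l x) * ipZ d m l :=
    Bop_apply_of_hasFDerivAt (((hasFDerivAt_smap m x).sub
      ((hasFDerivAt_smap l x).const_smul ε)).congr_fderiv (by module))
  have h₂ : Bop d (cmap d m + ε • cmap d l) x = (-smap d m x) ^ 2 * ipZ d m m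
      + (-ε * smap d l x) ^ 2 * ipZ d l l + 2 * (-smap d m x) * (-ε * smap d l x) * ipZ d m l :=
    Bop_apply_of_hasFDerivAt (((hasFDerivAt_cmap m x).add
      ((hasFDerivAt_cmap l x).const_smul ε)).congr_fderiv (by module))
  simp only [Pi.sub_apply, Pi.add_apply, Pi.smul_apply, Pi.one_apply, smul_eq_mul, h₁, h₂,
    cmap_add]
  linear_combination (-(ipZ d m m : ℝ)) * smap_sq_add_cmap_sq m x
    - ε ^ 2 * (ipZ d l l : ℝ) * smap_sq_add_cmap_sq l x - (ipZ d l l : ℝ) * hε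

lemma sub_Bop_cmap_add_add_Bop_smap_add (m l : Fin d → ℤ) {ε : ℝ} (hε : ε ^ 2 = 1) :
    ((ipZ d m m + ipZ d l l : ℝ) • 1
        - (Bop d (cmap d m + ε • smap d l) + Bop d (smap d m + ε • cmap d l)))
      = (2 * ε * ipZ d m l) • smap d (m + l) := by
  funext x
  have h₁ : Bop d (cmap d m + ε • smap d l) x = (-smap d m x) ^ 2 * ipZ d m m
      + (ε * cmap d l x) ^ 2 * ipZ d l l + 2 * (-smap d m x) * (ε * cmap d l x) * ipZ d m l :=
    Bop_apply_of_hasFDerivAt (((hasFDerivAt_cmap m x).add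
      ((hasFDerivAt_smap l x).const_smul ε)).congr_fderiv (by module))
  have h₂ : Bop d (smap d m + ε • cmap d l) x = (cmap d m x) ^ 2 * ipZ d m m
      + (-ε * smap d l x) ^ 2 * ipZ d l l + 2 * cmap d m x * (-ε * smap d l x) * ipZ d m l :=
    Bop_apply_of_hasFDerivAt (((hasFDerivAt_smap m x).add
      ((hasFDerivAt_cmap l x).const_smul ε)).congr_fderiv (by module))
  simp only [Pi.sub_apply, Pi.add_apply, Pi.smul_apply, Pi.one_apply, smul_eq_mul, h₁, h₂,
    smap_add]
  linear_combination (-(ipZ d m m : ℝ)) * smap_sq_add_cmap_sq m x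
    - ε ^ 2 * (ipZ d l l : ℝ) * smap_sq_add_cmap_sq l x - (ipZ d l l : ℝ) * hε

lemma cmap_add_mem_Fop (hone : 1 ∈ M) (hcm : cmap d m ∈ M) (hsm : smap d m ∈ M)
    (hcl : cmap d l ∈ M) (hsl : smap d l ∈ M) (hml : ipZ d m l ≠ 0) :
    cmap d (m + l) ∈ Fop d M := by
  have key (ε : ℝ) (hε : ε ^ 2 = 1) : (2 * ε * ipZ d m l) • cmap d (m + l) ∈ BRep d M := by
    rw [← sub_Bop_smap_sub_add_Bop_cmap_add m l hε]
    exact sub_Bop_add_Bop_mem_BRep (M.smul_mem _ hone) (M.sub_mem hsm (M.smul_mem ε hsl))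
      (M.add_mem hcm (M.smul_mem ε hcl))
  exact mem_Fop_of_smul_mem_BRep (t := 2 * ipZ d m l) (by simpa using hml)
    (by simpa using key 1 (one_pow 2)) (by simpa using key (-1) (by norm_num))

lemma smap_add_mem_Fop (hone : 1 ∈ M) (hcm : cmap d m ∈ M) (hsm : smap d m ∈ M)
    (hcl : cmap d l ∈ M) (hsl : smap d l ∈ M) (hml : ipZ d m l ≠ 0) :
    smap d (m + l) ∈ Fop d M := by
  have key (ε : ℝ) (hε : ε ^ 2 = 1) : (2 * ε * ipZ d m l) • smap d (m + l) ∈ BRep d M := by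
    rw [← sub_Bop_cmap_add_add_Bop_smap_add m l hε]
    exact sub_Bop_add_Bop_mem_BRep (M.smul_mem _ hone) (M.add_mem hcm (M.smul_mem ε hsl))
      (M.add_mem hsm (M.smul_mem ε hcl))
  exact mem_Fop_of_smul_mem_BRep (t := 2 * ipZ d m l) (by simpa using hml)
    (by simpa using key 1 (one_pow 2)) (by simpa using key (-1) (by norm_num))

end Frequencies

theorem stmt6_general (d : ℕ) (I : Finset (Fin d → ℤ))
    (m l : Fin d → ℤ) (hml : ipZ d m l ≠ 0)
    (hcm : cmap d m ∈ Hinf d I) (hsm : smap d m ∈ Hinf d I)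
    (hcl : cmap d l ∈ Hinf d I) (hsl : smap d l ∈ Hinf d I) :
    cmap d (m + l) ∈ Hinf d I ∧ smap d (m + l) ∈ Hinf d I := by
  obtain ⟨j₁, hcm⟩ := mem_Hinf_iff.mp hcm
  obtain ⟨j₂, hsm⟩ := mem_Hinf_iff.mp hsm
  obtain ⟨j₃, hcl⟩ := mem_Hinf_iff.mp hcl
  obtain ⟨j₄, hsl⟩ := mem_Hinf_iff.mp hsl
  set J := max (max j₁ j₂) (max j₃ j₄)
  have mono {j : ℕ} (hj : j ≤ J) := HSeqSubmodule_monotone d I hj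
  replace hcm := mono (by omega) hcm
  replace hsm := mono (by omega) hsm
  replace hcl := mono (by omega) hcl
  replace hsl := mono (by omega) hsl
  have hone := one_mem_HSeqSubmodule d I J
  exact ⟨mem_Hinf_iff.mpr ⟨J + 1, cmap_add_mem_Fop hone hcm hsm hcl hsl hml⟩,
    mem_Hinf_iff.mpr ⟨J + 1, smap_add_mem_Fop hone hcm hsm hcl hsl hml⟩⟩

/-- if ⟨m,l⟩ ≠ 0 and c_m, s_m, c_l, s_l ∈ H_∞(I), then
c_{m+l}, s_{m+l} ∈ H_∞(I). -/
theorem stmt6 (d : ℕ) (hd : 1 ≤ d) (I : Finset (Fin d → ℤ)) (hI : ∀ k ∈ I, k ≠ 0)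
    (m l : Fin d → ℤ) (hm : m ≠ 0) (hl : l ≠ 0) (hml : ipZ d m l ≠ 0)
    (hcm : cmap d m ∈ Hinf d I) (hsm : smap d m ∈ Hinf d I)
    (hcl : cmap d l ∈ Hinf d I) (hsl : smap d l ∈ Hinf d I) :
    cmap d (m + l) ∈ Hinf d I ∧ smap d (m + l) ∈ Hinf d I :=
  stmt6_general d I m l hml hcm hsm hcl hsl
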